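/- Let (u_t)_{0≤t≤T₀} and (u'_t)_{0≤t≤T₀} be two solutions of the nonlinear renewal equation with the same nonnegative initial condition g ∈ L¹([0,∞)), and suppose ‖u_s‖₁ ≤ R and ‖u'_s‖₁ ≤ R for all s ≤ T₀, and that |C(t,μ) − C(t,ν)| ≤ L·d_Pr(μ,ν) for all t ≤ T₀. Then for every t ∈ [0,T₀], ‖u_t − u'_t‖₁ ≤ ‖τ‖_∞·(L·R + 1)·∫₀^t ‖u_s − u'_s‖₁ ds; consequently, by Grönwall's inequality, u_t = u'_t in L¹([0,∞)) for every t ∈ [0,T₀]. -/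

import Mathlib

open MeasureTheory Set Filter

/-!
Both solutions carry the same initial datum, so `u_t - u'_t` vanishes on `[t, ∞)`. On `[0, t)`
the renewal equation, the bound `d_Pr(f da, h da) ≤ ‖f - h‖₁` and the Lipschitz bound on `C`
give `|u_t(a) - u'_t(a)| ≤ K ‖u_{t-a} - u'_{t-a}‖₁` with `K = B (max L 0 · R + 1)`. Iterating
this Volterra inequality from the a priori bound `‖u_t - u'_t‖₁ ≤ 2R` yields
`‖u_t - u'_t‖₁ ≤ 2R (Kt)ⁿ / n!` for all `n`, hence `u_t = u'_t`, after which the integral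
estimate is trivial. The iteration only integrates explicit polynomials in `t - a`, since
`s ↦ ‖u_s - u'_s‖₁` need not be measurable.
-/

/-- The finite measure on `[0,∞)` with Lebesgue density `f`. -/
noncomputable def densMeasure (f : ℝ → ℝ) : Measure ℝ :=
  (volume.restrict (Ici 0)).withDensity fun a => ENNReal.ofReal (f a)

/-- The `L¹([0,∞))`-norm of a function. -/
noncomputable def L1norm (f : ℝ → ℝ) : ℝ := ∫ a in Ici (0 : ℝ), |f a|

/-- `C` is Lipschitz in its measure argument, with constant `L`, uniformly over times in
`[0, T]`, with respect to the Lévy–Prokhorov distance on the finite nonnegative Borel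
measures supported on `[0, ∞)`. -/
def ProkhorovLipschitz (C : ℝ → Measure ℝ → ℝ) (L T : ℝ) : Prop :=
  ∀ t ∈ Icc (0 : ℝ) T, ∀ μ ν : Measure ℝ, IsFiniteMeasure μ → IsFiniteMeasure ν →
    μ (Iio 0) = 0 → ν (Iio 0) = 0 →
    |C t μ - C t ν| ≤ L * levyProkhorovDist μ ν

/-- `C` is (jointly) continuous on `[0,∞) × M([0,∞))`, where the space of finite
nonnegative measures on `[0,∞)` carries the weak topology, metrized by the
Lévy–Prokhorov distance. -/
def ProkhorovContinuous (C : ℝ → Measure ℝ → ℝ) : Prop :=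
  ∀ t ∈ Ici (0 : ℝ), ∀ μ : Measure ℝ, IsFiniteMeasure μ → μ (Iio 0) = 0 →
    ∀ ε > (0 : ℝ), ∃ δ > (0 : ℝ), ∀ s ∈ Ici (0 : ℝ), ∀ ν : Measure ℝ,
      IsFiniteMeasure ν → ν (Iio 0) = 0 →
      |s - t| < δ → levyProkhorovDist μ ν < δ → |C s ν - C t μ| < ε

/-- `u = (u_t)_{t ∈ I}` is a solution of the nonlinear renewal equation with initial
condition `g`, for times in the set `I`: each `u_t` is nonnegative and in `L¹([0,∞))`,
`u_t(a) = C(t-a, u_{t-a}) ∫₀^∞ u_{t-a}(s) τ(s) ds` for a.e. `a ∈ [0,t)`, and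
`u_t(a) = g(a-t)` for a.e. `a ≥ t`. -/
def IsRenewalSolutionOn (τ : ℝ → ℝ) (C : ℝ → Measure ℝ → ℝ) (g : ℝ → ℝ)
    (u : ℝ → ℝ → ℝ) (I : Set ℝ) : Prop :=
  ∀ t ∈ I,
    Integrable (u t) (volume.restrict (Ici 0)) ∧
    (∀ᵐ a ∂(volume.restrict (Ici (0 : ℝ))), 0 ≤ u t a) ∧
    (∀ᵐ a ∂(volume.restrict (Ico (0 : ℝ) t)),
      u t a = C (t - a) (densMeasure (u (t - a))) * ∫ z in Ici (0 : ℝ), u (t - a) z * τ z) ∧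
    (∀ᵐ a ∂(volume.restrict (Ici t)), u t a = g (a - t))

lemma withDensity_ofReal_apply_le_add {Ω : Type*} [MeasurableSpace Ω] {μ : Measure Ω}
    {f h : Ω → ℝ} (hh : AEMeasurable h μ) {B : Set Ω} (hB : MeasurableSet B) :
    μ.withDensity (fun a => ENNReal.ofReal (f a)) B ≤
      μ.withDensity (fun a => ENNReal.ofReal (h a)) B + ∫⁻ a, ENNReal.ofReal |f a - h a| ∂μ := by
  rw [withDensity_apply _ hB, withDensity_apply _ hB]
  calc ∫⁻ a in B, ENNReal.ofReal (f a) ∂μ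
      ≤ ∫⁻ a in B, (ENNReal.ofReal (h a) + ENNReal.ofReal |f a - h a|) ∂μ := by
        refine lintegral_mono fun a => ?_
        calc ENNReal.ofReal (f a) ≤ ENNReal.ofReal (h a + |f a - h a|) :=
              ENNReal.ofReal_le_ofReal (by linarith [le_abs_self (f a - h a)])
          _ ≤ _ := ENNReal.ofReal_add_le
    _ = ∫⁻ a in B, ENNReal.ofReal (h a) ∂μ + ∫⁻ a in B, ENNReal.ofReal |f a - h a| ∂μ :=
        lintegral_add_left' hh.restrict.ennreal_ofReal _
    _ ≤ _ := add_le_add le_rfl (setLIntegral_le_lintegral _ _)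

section LevyProkhorov

variable {Ω : Type*} [MeasurableSpace Ω] [PseudoEMetricSpace Ω]

lemma levyProkhorovEDist_le_of_forall_le_add {μ ν : Measure Ω} {δ : ENNReal}
    (h : ∀ B, MeasurableSet B → μ B ≤ ν B + δ ∧ ν B ≤ μ B + δ) :
    levyProkhorovEDist μ ν ≤ δ := by
  refine levyProkhorovEDist_le_of_forall μ ν δ fun ε B hδε hε hB => ?_
  have hε₀ : 0 < ε.toReal := ENNReal.toReal_pos (pos_of_gt hδε).ne' hε.ne
  have thick := Metric.self_subset_thickening hε₀ B
  exact ⟨(h B hB).1.trans (add_le_add (measure_mono thick) hδε.le),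
    (h B hB).2.trans (add_le_add (measure_mono thick) hδε.le)⟩

lemma levyProkhorovDist_withDensity_ofReal_le {μ : Measure Ω} {f h : Ω → ℝ}
    (hf : Integrable f μ) (hh : Integrable h μ) :
    levyProkhorovDist (μ.withDensity fun a => ENNReal.ofReal (f a))
      (μ.withDensity fun a => ENNReal.ofReal (h a)) ≤ ∫ a, |f a - h a| ∂μ := by
  refine ENNReal.toReal_le_of_le_ofReal (integral_nonneg fun a => abs_nonneg _) ?_
  have hint : Integrable (fun a => |f a - h a|) μ := (hf.sub hh).abs
  rw [ofReal_integral_eq_lintegral_ofReal hint (ae_of_all _ fun a => abs_nonneg _)]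
  refine levyProkhorovEDist_le_of_forall_le_add fun B hB =>
    ⟨withDensity_ofReal_apply_le_add hh.aemeasurable hB, ?_⟩
  simpa only [abs_sub_comm] using withDensity_ofReal_apply_le_add (f := h) hf.aemeasurable hB

end LevyProkhorov

lemma abs_integral_mul_le {α : Type*} [MeasurableSpace α] {μ : Measure α} {v τ : α → ℝ}
    {B : ℝ} (hv : Integrable v μ) (hτ : ∀ᵐ a ∂μ, |τ a| ≤ B) :
    |∫ a, v a * τ a ∂μ| ≤ B * ∫ a, |v a| ∂μ :=
  calc |∫ a, v a * τ a ∂μ| ≤ ∫ a, |v a * τ a| ∂μ := abs_integral_le_integral_abs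
    _ ≤ ∫ a, B * |v a| ∂μ := by
        refine integral_mono_of_nonneg (ae_of_all _ fun a => abs_nonneg _)
          (hv.abs.const_mul B) ?_
        filter_upwards [hτ] with a ha
        rw [abs_mul, mul_comm]
        exact mul_le_mul_of_nonneg_right ha (abs_nonneg _)
    _ = B * ∫ a, |v a| ∂μ := integral_const_mul _ _

lemma abs_mul_sub_mul_le {c c' N N' : ℝ} (hN : 0 ≤ N) (hc' : c' ∈ Icc (0 : ℝ) 1) :
    |c * N - c' * N'| ≤ |c - c'| * N + |N - N'| :=
  calc |c * N - c' * N'| = |(c - c') * N + c' * (N - N')| := by ring_nf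
    _ ≤ |(c - c') * N| + |c' * (N - N')| := abs_add_le _ _
    _ ≤ |c - c'| * N + |N - N'| := by
        rw [abs_mul, abs_mul, abs_of_nonneg hN, abs_of_nonneg hc'.1]
        exact add_le_add le_rfl (mul_le_of_le_one_left (abs_nonneg _) hc'.2)

section VolterraInequality

variable {D : ℝ → ℝ} {φ : ℝ → ℝ → ℝ} {T M K : ℝ}

lemma integral_Ico_sub_pow {t : ℝ} (ht : 0 ≤ t) (n : ℕ) :
    ∫ a in Ico 0 t, (t - a) ^ n = t ^ (n + 1) / (n + 1) := by
  rw [integral_Ico_eq_integral_Ioo, ← integral_Ioc_eq_integral_Ioo,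
    ← intervalIntegral.integral_of_le ht, intervalIntegral.integral_comp_sub_left (· ^ n) t]
  simp [integral_pow]

lemma integral_Ico_mul_pow_div_factorial {t : ℝ} (ht : 0 ≤ t) (n : ℕ) :
    ∫ a in Ico 0 t, K * (M * (K * (t - a)) ^ n / n.factorial) =
      M * (K * t) ^ (n + 1) / (n + 1).factorial := by
  have hrw : ∀ a, K * (M * (K * (t - a)) ^ n / n.factorial) =
      M * K ^ (n + 1) / n.factorial * (t - a) ^ n := fun a => by rw [mul_pow]; ring
  simp_rw [hrw]
  rw [integral_const_mul, integral_Ico_sub_pow ht, Nat.factorial_succ]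
  push_cast
  field_simp
  ring

lemma le_pow_div_factorial_of_le_integral_Ico (hK : 0 ≤ K) (hM : ∀ t ∈ Icc 0 T, D t ≤ M)
    (hφ : ∀ t ∈ Icc 0 T, IntegrableOn (φ t) (Ico 0 t))
    (hDφ : ∀ t ∈ Icc 0 T, D t ≤ ∫ a in Ico 0 t, φ t a)
    (hφD : ∀ t ∈ Icc 0 T, ∀ᵐ a ∂volume.restrict (Ico 0 t), φ t a ≤ K * D (t - a)) (n : ℕ) :
    ∀ t ∈ Icc 0 T, D t ≤ M * (K * t) ^ n / n.factorial := by
  induction n with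
  | zero => simpa using hM
  | succ n ih =>
    intro t ht
    calc D t ≤ ∫ a in Ico 0 t, φ t a := hDφ t ht
      _ ≤ ∫ a in Ico 0 t, K * (M * (K * (t - a)) ^ n / n.factorial) := by
          refine integral_mono_ae (hφ t ht) ?_ ?_
          · exact (Continuous.integrableOn_Icc (by fun_prop)).mono_set Ico_subset_Icc_self
          filter_upwards [hφD t ht, ae_restrict_mem measurableSet_Ico] with a hφa ha
          exact hφa.trans (mul_le_mul_of_nonneg_left
            (ih (t - a) ⟨by linarith [ha.2], by linarith [ha.1, ht.2]⟩) hK)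
      _ = M * (K * t) ^ (n + 1) / (n + 1).factorial := integral_Ico_mul_pow_div_factorial ht.1 n

lemma nonpos_of_le_integral_Ico (hK : 0 ≤ K) (hM : ∀ t ∈ Icc 0 T, D t ≤ M)
    (hφ : ∀ t ∈ Icc 0 T, IntegrableOn (φ t) (Ico 0 t))
    (hDφ : ∀ t ∈ Icc 0 T, D t ≤ ∫ a in Ico 0 t, φ t a)
    (hφD : ∀ t ∈ Icc 0 T, ∀ᵐ a ∂volume.restrict (Ico 0 t), φ t a ≤ K * D (t - a)) :
    ∀ t ∈ Icc 0 T, D t ≤ 0 := fun t ht =>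
  ge_of_tendsto'
    (by simpa [mul_div_assoc] using
      (FloorSemiring.tendsto_pow_div_factorial_atTop (K * t)).const_mul M)
    fun n => le_pow_div_factorial_of_le_integral_Ico hK hM hφ hDφ hφD n t ht

end VolterraInequality

lemma L1norm_nonneg (f : ℝ → ℝ) : 0 ≤ L1norm f := integral_nonneg fun _ => abs_nonneg _

lemma L1norm_sub_le {f h : ℝ → ℝ} (hf : Integrable f (volume.restrict (Ici 0)))
    (hh : Integrable h (volume.restrict (Ici 0))) :
    L1norm (fun a => f a - h a) ≤ L1norm f + L1norm h :=
  (integral_mono (hf.sub hh).abs (hf.abs.add hh.abs) fun _ => abs_sub _ _).trans_eq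
    (integral_add hf.abs hh.abs)

lemma L1norm_eq_setIntegral_Ico {f : ℝ → ℝ} {t : ℝ}
    (hf : ∀ᵐ a ∂volume.restrict (Ici t), f a = 0) :
    L1norm f = ∫ a in Ico 0 t, |f a| := by
  refine setIntegral_eq_of_subset_of_ae_sdiff_eq_zero measurableSet_Ici.nullMeasurableSet
    Ico_subset_Ici_self ?_
  filter_upwards [(ae_restrict_iff' measurableSet_Ici).1 hf] with a ha ha'
  rw [ha (not_lt.1 fun h => ha'.2 ⟨ha'.1, h⟩), abs_zero]

lemma ae_eq_of_L1norm_sub_eq_zero {f h : ℝ → ℝ} (hf : Integrable f (volume.restrict (Ici 0)))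
    (hh : Integrable h (volume.restrict (Ici 0))) (hfh : L1norm (fun a => f a - h a) = 0) :
    f =ᵐ[volume.restrict (Ici 0)] h := by
  filter_upwards [(integral_eq_zero_iff_of_nonneg (fun a => abs_nonneg _) (hf.sub hh).abs).1 hfh]
    with a ha
  exact sub_eq_zero.1 (abs_eq_zero.1 ha)

lemma densMeasure_Iio (f : ℝ → ℝ) : densMeasure f (Iio 0) = 0 :=
  withDensity_absolutelyContinuous _ _ (by
    rw [Measure.restrict_apply measurableSet_Iio, Iio_inter_Ici, Ico_self, measure_empty])

lemma levyProkhorovDist_densMeasure_le {f h : ℝ → ℝ}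
    (hf : Integrable f (volume.restrict (Ici 0))) (hh : Integrable h (volume.restrict (Ici 0))) :
    levyProkhorovDist (densMeasure f) (densMeasure h) ≤ L1norm (fun a => f a - h a) :=
  levyProkhorovDist_withDensity_ofReal_le hf hh

lemma ProkhorovLipschitz.abs_sub_densMeasure_le {C : ℝ → Measure ℝ → ℝ} {L T t : ℝ}
    (hC : ProkhorovLipschitz C L T) (ht : t ∈ Icc 0 T) {f h : ℝ → ℝ}
    (hf : Integrable f (volume.restrict (Ici 0))) (hh : Integrable h (volume.restrict (Ici 0))) :
    |C t (densMeasure f) - C t (densMeasure h)| ≤ max L 0 * L1norm (fun a => f a - h a) :=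
  calc |C t (densMeasure f) - C t (densMeasure h)|
      ≤ L * levyProkhorovDist (densMeasure f) (densMeasure h) :=
        hC t ht _ _ (isFiniteMeasure_withDensity_ofReal hf.2)
          (isFiniteMeasure_withDensity_ofReal hh.2) (densMeasure_Iio f) (densMeasure_Iio h)
    _ ≤ max L 0 * levyProkhorovDist (densMeasure f) (densMeasure h) :=
        mul_le_mul_of_nonneg_right (le_max_left _ _) ENNReal.toReal_nonneg
    _ ≤ max L 0 * L1norm (fun a => f a - h a) :=
        mul_le_mul_of_nonneg_left (levyProkhorovDist_densMeasure_le hf hh) (le_max_right _ _)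

namespace IsRenewalSolutionOn

variable {τ : ℝ → ℝ} {C : ℝ → Measure ℝ → ℝ} {g : ℝ → ℝ} {u u' : ℝ → ℝ → ℝ} {T t : ℝ}

lemma L1norm_sub_eq_setIntegral_Ico (hu : IsRenewalSolutionOn τ C g u (Icc 0 T))
    (hu' : IsRenewalSolutionOn τ C g u' (Icc 0 T)) (ht : t ∈ Icc 0 T) :
    L1norm (fun a => u t a - u' t a) = ∫ a in Ico 0 t, |u t a - u' t a| := by
  refine L1norm_eq_setIntegral_Ico ?_
  filter_upwards [(hu t ht).2.2.2, (hu' t ht).2.2.2] with a hua hu'a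
  rw [hua, hu'a, sub_self]

lemma ae_abs_sub_le_L1norm_sub {B L R : ℝ} (hτ : Measurable τ) (hτ0 : ∀ a, 0 ≤ τ a) (hB : 0 ≤ B)
    (hτB : ∀ᵐ a ∂(volume.restrict (Ici (0 : ℝ))), τ a ≤ B)
    (hC01 : ∀ t μ, C t μ ∈ Icc (0 : ℝ) 1) (hCLip : ProkhorovLipschitz C L T)
    (hu : IsRenewalSolutionOn τ C g u (Icc 0 T)) (hu' : IsRenewalSolutionOn τ C g u' (Icc 0 T))
    (hR : ∀ s ∈ Icc (0 : ℝ) T, L1norm (u s) ≤ R) (ht : t ∈ Icc 0 T) :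
    ∀ᵐ a ∂volume.restrict (Ico 0 t), |u t a - u' t a| ≤
      B * (max L 0 * R + 1) * L1norm (fun z => u (t - a) z - u' (t - a) z) := by
  filter_upwards [(hu t ht).2.2.1, (hu' t ht).2.2.1, ae_restrict_mem measurableSet_Ico]
    with a hua hu'a ha
  have hs : t - a ∈ Icc 0 T := ⟨by linarith [ha.2], by linarith [ha.1, ht.2]⟩
  obtain ⟨hint, hnonneg, -, -⟩ := hu _ hs
  have hint' := (hu' _ hs).1
  have hτabs : ∀ᵐ z ∂(volume.restrict (Ici (0 : ℝ))), |τ z| ≤ B :=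
    hτB.mono fun z hz => (abs_of_nonneg (hτ0 z)).trans_le hz
  have hintτ : ∀ v : ℝ → ℝ, Integrable v (volume.restrict (Ici 0)) →
      Integrable (fun z => v z * τ z) (volume.restrict (Ici 0)) := fun v hv =>
    hv.mul_bdd hτ.aestronglyMeasurable (by simpa only [Real.norm_eq_abs] using hτabs)
  set N := ∫ z in Ici (0 : ℝ), u (t - a) z * τ z
  set N' := ∫ z in Ici (0 : ℝ), u' (t - a) z * τ z
  have hN : 0 ≤ N := integral_nonneg_of_ae (hnonneg.mono fun z hz => mul_nonneg hz (hτ0 z))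
  have hNR : N ≤ B * R :=
    (le_abs_self N).trans <| (abs_integral_mul_le hint hτabs).trans <|
      mul_le_mul_of_nonneg_left (hR _ hs) hB
  have hNN' : |N - N'| ≤ B * L1norm (fun z => u (t - a) z - u' (t - a) z) := by
    have hdiff : Integrable (fun z => u (t - a) z - u' (t - a) z) (volume.restrict (Ici 0)) :=
      hint.sub hint'
    rw [← integral_sub (hintτ _ hint) (hintτ _ hint')]
    simp_rw [← sub_mul]
    exact abs_integral_mul_le hdiff hτabs
  rw [hua, hu'a]
  calc _ ≤ |C (t - a) (densMeasure (u (t - a))) - C (t - a) (densMeasure (u' (t - a)))| * N +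
        |N - N'| := abs_mul_sub_mul_le hN (hC01 _ _)
    _ ≤ max L 0 * L1norm (fun z => u (t - a) z - u' (t - a) z) * (B * R) +
        B * L1norm (fun z => u (t - a) z - u' (t - a) z) :=
        add_le_add (mul_le_mul (hCLip.abs_sub_densMeasure_le hs hint hint') hNR hN
          (mul_nonneg (le_max_right _ _) (L1norm_nonneg _))) hNN'
    _ = _ := by ring

end IsRenewalSolutionOn

theorem renewal_solution_gronwall_uniqueness_general
    (τ : ℝ → ℝ) (hτmeas : Measurable τ) (hτnonneg : ∀ a, 0 ≤ τ a)
    (B : ℝ) (hτB : ∀ᵐ a ∂(volume.restrict (Ici (0 : ℝ))), τ a ≤ B)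
    (C : ℝ → Measure ℝ → ℝ)
    (hC01 : ∀ t μ, C t μ ∈ Icc (0 : ℝ) 1)
    (T₀ L R : ℝ)
    (hCLip : ProkhorovLipschitz C L T₀)
    (g : ℝ → ℝ)
    (u u' : ℝ → ℝ → ℝ)
    (hu : IsRenewalSolutionOn τ C g u (Icc 0 T₀))
    (hu' : IsRenewalSolutionOn τ C g u' (Icc 0 T₀))
    (hR : ∀ s ∈ Icc (0 : ℝ) T₀, L1norm (u s) ≤ R)
    (hR' : ∀ s ∈ Icc (0 : ℝ) T₀, L1norm (u' s) ≤ R) :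
    (∀ t ∈ Icc (0 : ℝ) T₀,
        L1norm (fun a => u t a - u' t a) ≤
          B * (L * R + 1) * ∫ s in Icc (0 : ℝ) t, L1norm (fun a => u s a - u' s a)) ∧
      ∀ t ∈ Icc (0 : ℝ) T₀, u t =ᵐ[volume.restrict (Ici (0 : ℝ))] u' t := by
  have hB : 0 ≤ B := by
    have : (ae (volume.restrict (Ici (0 : ℝ)))).NeBot := ae_neBot.2 (by simp)
    obtain ⟨a, ha⟩ := hτB.exists
    exact (hτnonneg a).trans ha
  have hD : ∀ t ∈ Icc 0 T₀, L1norm (fun a => u t a - u' t a) = 0 := by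
    intro t ht
    have hR0 : 0 ≤ R := (L1norm_nonneg _).trans (hR t ht)
    refine le_antisymm ?_ (L1norm_nonneg _)
    refine nonpos_of_le_integral_Ico (D := fun s => L1norm (fun a => u s a - u' s a))
      (φ := fun s a => |u s a - u' s a|) (M := R + R) (K := B * (max L 0 * R + 1))
      (by positivity) (fun s hs => ?_) (fun s hs => ?_) (fun s hs => ?_) (fun s hs => ?_) t ht
    · exact (L1norm_sub_le (hu s hs).1 (hu' s hs).1).trans (add_le_add (hR s hs) (hR' s hs))
    · exact IntegrableOn.mono_set ((hu s hs).1.sub (hu' s hs).1).abs Ico_subset_Ici_self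
    · exact (hu.L1norm_sub_eq_setIntegral_Ico hu' hs).le
    · exact hu.ae_abs_sub_le_L1norm_sub hτmeas hτnonneg hB hτB hC01 hCLip hu' hR hs
  refine ⟨fun t ht => ?_, fun t ht =>
    ae_eq_of_L1norm_sub_eq_zero (hu t ht).1 (hu' t ht).1 (hD t ht)⟩
  rw [hD t ht, setIntegral_congr_fun measurableSet_Icc fun s hs => hD s ⟨hs.1, hs.2.trans ht.2⟩]
  simp

/-- Grönwall estimate and uniqueness: if `(u_t)` and `(u'_t)` are two
solutions on `[0,T₀]` of the nonlinear renewal equation with the same nonnegative initial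
condition `g`, both of `L¹`-norm at most `R` on `[0,T₀]`, and `C` is `L`-Lipschitz in the
measure argument (Prokhorov distance) for `t ≤ T₀`, then
`‖u_t − u'_t‖₁ ≤ ‖τ‖_∞·(L·R + 1)·∫₀^t ‖u_s − u'_s‖₁ ds` for all `t ∈ [0,T₀]`, and
consequently `u_t = u'_t` in `L¹([0,∞))` for every `t ∈ [0,T₀]`. -/
theorem renewal_solution_gronwall_uniqueness
    (τ : ℝ → ℝ) (hτmeas : Measurable τ) (hτnonneg : ∀ a, 0 ≤ τ a)
    (B : ℝ) (hτB : ∀ᵐ a ∂(volume.restrict (Ici (0 : ℝ))), τ a ≤ B)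
    (C : ℝ → Measure ℝ → ℝ)
    (hC01 : ∀ t μ, C t μ ∈ Icc (0 : ℝ) 1)
    (hCcont : ProkhorovContinuous C)
    (T₀ L R : ℝ) (hT₀ : 0 < T₀)
    (hCLip : ProkhorovLipschitz C L T₀)
    (g : ℝ → ℝ) (hg : Integrable g (volume.restrict (Ici 0)))
    (hgnonneg : ∀ᵐ a ∂(volume.restrict (Ici (0 : ℝ))), 0 ≤ g a)
    (u u' : ℝ → ℝ → ℝ)
    (hu : IsRenewalSolutionOn τ C g u (Icc 0 T₀))
    (hu' : IsRenewalSolutionOn τ C g u' (Icc 0 T₀))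
    (hR : ∀ s ∈ Icc (0 : ℝ) T₀, L1norm (u s) ≤ R)
    (hR' : ∀ s ∈ Icc (0 : ℝ) T₀, L1norm (u' s) ≤ R) :
    (∀ t ∈ Icc (0 : ℝ) T₀,
        L1norm (fun a => u t a - u' t a) ≤
          B * (L * R + 1) * ∫ s in Icc (0 : ℝ) t, L1norm (fun a => u s a - u' s a)) ∧
      ∀ t ∈ Icc (0 : ℝ) T₀, u t =ᵐ[volume.restrict (Ici (0 : ℝ))] u' t :=
  renewal_solution_gronwall_uniqueness_general τ hτmeas hτnonneg B hτB C hC01 T₀ L R hCLip g u u' hu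
    hu' hR hR'
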